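/- Let λ > 0 and p(n) ~ λ/n^d. For every ε > 0, δ > 0, and r ∈ ℕ, the probability that there exists a vertex v_0 in G^{d+1}(n,p) whose ball B(v_0, r) of radius r (in the hypergraph distance) contains more than ε n^δ vertices tends to 0 as n → ∞. -/

import Mathlib

/-!
If every vertex has degree less than `k`, a ball of radius `r` has at most `(1 + k d) ^ r`
vertices. By the union bound, some vertex has degree at least `k` with probability at most
`n (n ^ d p) ^ k / k! ≤ n C ^ k / k!`, where `C` eventually bounds `n ^ d p`. For
`k = K + ⌈2 log n⌉` with `K ≥ e C` this is `O(1 / n)`, while `(1 + k d) ^ r` is polylogarithmic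
in `n`, hence eventually below `ε n ^ δ`.
-/

open Finset Filter Asymptotics

noncomputable section
open scoped Classical

/-- The type of potential edges of a `(d+1)`-uniform hypergraph on `n` vertices. -/
abbrev Edge (d n : ℕ) := {s : Finset (Fin n) // s.card = d + 1}

/-- Probability of an event in the binomial random `(d+1)`-uniform hypergraph `G^{d+1}(n,p)`. -/
def hprob (d n : ℕ) (p : ℝ) (P : Finset (Edge d n) → Prop) : ℝ :=
  ∑ H : Finset (Edge d n),
    if P H then p ^ H.card * (1 - p) ^ (Fintype.card (Edge d n) - H.card) else 0

/-- Expectation of a random variable on `G^{d+1}(n,p)`. -/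
def hexp (d n : ℕ) (p : ℝ) (X : Finset (Edge d n) → ℝ) : ℝ :=
  ∑ H : Finset (Edge d n),
    p ^ H.card * (1 - p) ^ (Fintype.card (Edge d n) - H.card) * X H

/-- Two vertices are adjacent if they are distinct and share an edge. -/
def eadj {d n : ℕ} (H : Finset (Edge d n)) (x y : Fin n) : Prop :=
  x ≠ y ∧ ∃ e ∈ H, x ∈ e.1 ∧ y ∈ e.1

/-- The connected component of a vertex, as a finset. -/
def ecomp {d n : ℕ} (H : Finset (Edge d n)) (x : Fin n) : Finset (Fin n) :=
  Finset.univ.filter fun y => Relation.ReflTransGen (eadj H) x y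

/-- The hypergraph is connected. -/
def econn {d n : ℕ} (H : Finset (Edge d n)) : Prop :=
  ∀ x y : Fin n, Relation.ReflTransGen (eadj H) x y

/-- The incidence graph of a hypergraph (a bipartite graph between vertices and edges);
Berge-acyclicity means this graph is acyclic. -/
def einc {d n : ℕ} (H : Finset (Edge d n)) : SimpleGraph (Fin n ⊕ Edge d n) where
  Adj a b := (∃ v e, a = Sum.inl v ∧ b = Sum.inr e ∧ e ∈ H ∧ v ∈ e.1) ∨
             (∃ v e, b = Sum.inl v ∧ a = Sum.inr e ∧ e ∈ H ∧ v ∈ e.1)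
  symm := ⟨fun a b h => h.symm⟩
  loopless := ⟨by rintro a (⟨v, e, rfl, h2, -⟩ | ⟨v, e, rfl, h2, -⟩) <;> simp at h2⟩

/-- The image of an edge under an injection of vertex sets. -/
def mapEdge {d v n : ℕ} (f : Fin v ↪ Fin n) (e : Edge d v) : Edge d n :=
  ⟨e.1.map f, by rw [Finset.card_map]; exact e.2⟩

/-- A butterfly of order `l`: a connected Berge-acyclic `(d+1)`-uniform hypergraph with `l`
edges, on its `1 + l*d` vertices. -/
def IsButterfly (d l : ℕ) (K : Finset (Edge d (1 + l * d))) : Prop :=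
  K.card = l ∧ (∀ x y : Fin (1 + l * d), Relation.ReflTransGen (eadj K) x y) ∧
    (einc K).IsAcyclic

/-- The degree of a vertex: the number of edges containing it. -/
def edeg {d n : ℕ} (H : Finset (Edge d n)) (x : Fin n) : ℕ :=
  (H.filter fun e => x ∈ e.1).card

/-- `f` embeds `K` as a connected-component copy in `H`: all edges of `K` are present
and no edge of `H` meets the image except images of edges of `K`. -/
def IsCompCopy {d v n : ℕ} (K : Finset (Edge d v)) (H : Finset (Edge d n))
    (f : Fin v ↪ Fin n) : Prop :=
  (∀ e ∈ K, mapEdge f e ∈ H) ∧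
    ∀ e ∈ H, (∃ i, f i ∈ e.1) → ∃ e' ∈ K, e = mapEdge f e'

/-- The number of connected components of `H` isomorphic to `K`. -/
def numCompCopies {d v n : ℕ} (K : Finset (Edge d v)) (H : Finset (Edge d n)) : ℕ :=
  ((Finset.univ : Finset (Finset (Fin n))).filter fun s =>
    ∃ f : Fin v ↪ Fin n, IsCompCopy K H f ∧ Finset.univ.map f = s).card

/-- Two hypergraphs on the same labelled vertex set are isomorphic. -/
def EquivHyper {d v : ℕ} (K K' : Finset (Edge d v)) : Prop :=
  ∃ g : Fin v ≃ Fin v, ∀ e : Edge d v, e ∈ K ↔ mapEdge g.toEmbedding e ∈ K'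

/-- The number of hypergraphs on `v` labelled vertices isomorphic to `K`. -/
def countType {d v : ℕ} (K : Finset (Edge d v)) : ℕ :=
  ((Finset.univ : Finset (Finset (Edge d v))).filter fun K' => EquivHyper K' K).card

/-- The number of vertices of the largest connected component. -/
def giantSize {d n : ℕ} (H : Finset (Edge d n)) : ℕ :=
  Finset.univ.sup fun x : Fin n => (ecomp H x).card

/-- `μ`: the number of vertices outside the largest connected component. -/
def mu {d n : ℕ} (H : Finset (Edge d n)) : ℕ := n - giantSize H

/-- An edge of a Berge-acyclic hypergraph is a leaf if it is incident to exactly one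
other edge. -/
def IsLeaf {d v : ℕ} (K : Finset (Edge d v)) (e : Edge d v) : Prop :=
  e ∈ K ∧ (K.filter fun e' => e' ≠ e ∧ (e'.1 ∩ e.1).Nonempty).card = 1

/-- A `v*`-marked `l`-butterfly `(K, M)` is minimal if every leaf edge contains a marked
vertex. -/
def IsMinimalMarked {d v : ℕ} (K : Finset (Edge d v)) (M : Finset (Fin v)) : Prop :=
  ∀ e ∈ K, IsLeaf K e → ∃ x ∈ e.1, x ∈ M

/-- The number of copies of the marked butterfly `(K, M)` in `H`: not-necessarily-induced
sub-hypergraphs isomorphic to `K` in which each marked vertex has the same degree in `H`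
as in `K`. Copies are counted by their (edge set, marked vertex set) pair. -/
def numMarkedCopies {d v n : ℕ} (K : Finset (Edge d v)) (M : Finset (Fin v))
    (H : Finset (Edge d n)) : ℕ :=
  Set.ncard {q : Finset (Edge d n) × Finset (Fin n) |
    ∃ f : Fin v ↪ Fin n, (∀ e ∈ K, mapEdge f e ∈ H) ∧
      (∀ x ∈ M, edeg H (f x) = edeg K x) ∧
      q.1 = K.image (mapEdge f) ∧ q.2 = M.map f}

/-- Two marked hypergraphs on the same labelled vertex set are isomorphic. -/
def EquivMarked {d v : ℕ} (K K' : Finset (Edge d v)) (M M' : Finset (Fin v)) : Prop :=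
  ∃ g : Fin v ≃ Fin v, (∀ e : Edge d v, e ∈ K ↔ mapEdge g.toEmbedding e ∈ K') ∧
    M.map g.toEmbedding = M'

/-- The number of marked hypergraphs on `v` labelled vertices isomorphic to `(K, M)`. -/
def countMarkedType {d v : ℕ} (K : Finset (Edge d v)) (M : Finset (Fin v)) : ℕ :=
  ((Finset.univ : Finset (Finset (Edge d v) × Finset (Fin v))).filter fun q =>
    EquivMarked q.1 K q.2 M).card

/-- The ball of radius `r` around a vertex in the hypergraph distance. -/
def hball {d n : ℕ} (H : Finset (Edge d n)) (x : Fin n) : ℕ → Finset (Fin n)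
  | 0 => {x}
  | r + 1 => hball H x r ∪ Finset.univ.filter fun y => ∃ z ∈ hball H x r, eadj H z y

section RandomHypergraph

variable {d n : ℕ} {p : ℝ}

lemma hprob_weight_nonneg (hp0 : 0 ≤ p) (hp1 : p ≤ 1) (H : Finset (Edge d n)) :
    0 ≤ p ^ H.card * (1 - p) ^ (Fintype.card (Edge d n) - H.card) :=
  mul_nonneg (pow_nonneg hp0 _) (pow_nonneg (sub_nonneg.2 hp1) _)

lemma hprob_nonneg (hp0 : 0 ≤ p) (hp1 : p ≤ 1) (P : Finset (Edge d n) → Prop) :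
    0 ≤ hprob d n p P :=
  sum_nonneg fun H _ => by
    split_ifs
    exacts [hprob_weight_nonneg hp0 hp1 H, le_rfl]

lemma hprob_mono (hp0 : 0 ≤ p) (hp1 : p ≤ 1) {P Q : Finset (Edge d n) → Prop}
    (h : ∀ H, P H → Q H) : hprob d n p P ≤ hprob d n p Q :=
  sum_le_sum fun H _ => by
    by_cases hP : P H
    · simp only [if_pos hP, if_pos (h H hP), le_rfl]
    · rw [if_neg hP]
      split_ifs
      exacts [hprob_weight_nonneg hp0 hp1 H, le_rfl]

lemma hprob_exists_le (hp0 : 0 ≤ p) (hp1 : p ≤ 1) {ι : Type*} (s : Finset ι)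
    (P : ι → Finset (Edge d n) → Prop) :
    hprob d n p (fun H => ∃ i ∈ s, P i H) ≤ ∑ i ∈ s, hprob d n p (P i) := by
  simp only [hprob]
  rw [sum_comm]
  refine sum_le_sum fun H _ => ?_
  have hterm : ∀ i ∈ s, 0 ≤ if P i H then
      p ^ H.card * (1 - p) ^ (Fintype.card (Edge d n) - H.card) else 0 := fun i _ => by
    split_ifs
    exacts [hprob_weight_nonneg hp0 hp1 H, le_rfl]
  split_ifs with hH
  · obtain ⟨i, hi, hPi⟩ := hH
    simpa only [if_pos hPi] using single_le_sum hterm hi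
  · exact sum_nonneg hterm

lemma hprob_superset (S : Finset (Edge d n)) : hprob d n p (S ⊆ ·) = p ^ S.card := by
  have hfilter : univ.filter (S ⊆ ·) = Icc S univ := by ext; simp
  have hdisj : ∀ T ∈ (univ \ S).powerset, Disjoint S T := fun T hT =>
    (subset_sdiff.1 (mem_powerset.1 hT)).2.symm
  have hinj : Set.InjOn (S ∪ ·) ↑(univ \ S).powerset := fun T hT T' hT' hTT' => by
    rw [← union_sdiff_cancel_left (hdisj T hT), ← union_sdiff_cancel_left (hdisj T' hT')]
    exact congrArg (· \ S) hTT'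
  have hweight : ∀ T ∈ (univ \ S).powerset,
      p ^ (S ∪ T).card * (1 - p) ^ (Fintype.card (Edge d n) - (S ∪ T).card) =
        p ^ S.card * (p ^ T.card * (1 - p) ^ ((univ \ S).card - T.card)) := fun T hT => by
    rw [card_union_of_disjoint (hdisj T hT), card_sdiff_of_subset (subset_univ S), card_univ,
      pow_add, Nat.sub_sub, mul_assoc]
  calc hprob d n p (S ⊆ ·)
      = ∑ H ∈ univ.filter (S ⊆ ·), p ^ H.card * (1 - p) ^ (Fintype.card (Edge d n) - H.card) := by
        rw [hprob, sum_filter]; congr!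
    _ = p ^ S.card := by
      rw [hfilter, Icc_eq_image_powerset (subset_univ S), sum_image hinj,
        sum_congr rfl hweight, ← mul_sum, sum_pow_mul_eq_add_pow, add_sub_cancel, one_pow,
        mul_one]

lemma card_edges_mem_le (x : Fin n) :
    (univ.filter fun e : Edge d n => x ∈ e.1).card ≤ n ^ d := by
  have hmaps : Set.MapsTo (fun e : Edge d n => e.1.erase x)
      ↑(univ.filter fun e : Edge d n => x ∈ e.1) ↑(powersetCard d (univ : Finset (Fin n))) :=
    fun e he => by
      rw [mem_coe, mem_filter] at he
      simp [card_erase_of_mem he.2, e.2]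
  have hinj : Set.InjOn (fun e : Edge d n => e.1.erase x)
      ↑(univ.filter fun e : Edge d n => x ∈ e.1) := fun e he e' he' hee' => by
    rw [mem_coe, mem_filter] at he he'
    exact Subtype.ext (by rw [← insert_erase he.2, ← insert_erase he'.2]; exact congrArg _ hee')
  calc _ ≤ (powersetCard d (univ : Finset (Fin n))).card := card_le_card_of_injOn _ hmaps hinj
    _ = n.choose d := by rw [card_powersetCard, card_univ, Fintype.card_fin]
    _ ≤ n ^ d := Nat.choose_le_pow n d

lemma hprob_le_edeg_le (hp0 : 0 ≤ p) (hp1 : p ≤ 1) (k : ℕ) (x : Fin n) :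
    hprob d n p (fun H => k ≤ edeg H x) ≤ ((n : ℝ) ^ d * p) ^ k / k.factorial := by
  set E := univ.filter fun e : Edge d n => x ∈ e.1
  have hsub : ∀ H, k ≤ edeg H x → ∃ S ∈ E.powersetCard k, S ⊆ H := fun H hH => by
    obtain ⟨S, hS, hcard⟩ := exists_subset_card_eq hH
    refine ⟨S, mem_powersetCard.2 ⟨fun e he => ?_, hcard⟩, hS.trans (filter_subset _ _)⟩
    simpa [E] using (mem_filter.1 (hS he)).2
  have hE : ((E.card : ℕ) : ℝ) ≤ ((n ^ d : ℕ) : ℝ) := by exact_mod_cast card_edges_mem_le x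
  calc hprob d n p (fun H => k ≤ edeg H x)
      ≤ ∑ S ∈ E.powersetCard k, hprob d n p (S ⊆ ·) :=
        (hprob_mono hp0 hp1 hsub).trans (hprob_exists_le hp0 hp1 _ _)
    _ = (E.card.choose k : ℝ) * p ^ k := by
        rw [sum_congr rfl fun S hS => by rw [hprob_superset, (mem_powersetCard.1 hS).2],
          sum_const, card_powersetCard, nsmul_eq_mul]
    _ ≤ ((n ^ d : ℕ) : ℝ) ^ k / k.factorial * p ^ k := by
        gcongr
        exact (Nat.choose_le_pow_div k _).trans (by gcongr)
    _ = ((n : ℝ) ^ d * p) ^ k / k.factorial := by push_cast; ring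

lemma hprob_exists_le_edeg_le (hp0 : 0 ≤ p) (hp1 : p ≤ 1) (k : ℕ) :
    hprob d n p (fun H => ∃ x, k ≤ edeg H x) ≤ n * (((n : ℝ) ^ d * p) ^ k / k.factorial) :=
  calc hprob d n p (fun H => ∃ x, k ≤ edeg H x)
      ≤ ∑ x : Fin n, hprob d n p (fun H => k ≤ edeg H x) :=
        (hprob_mono hp0 hp1 fun H ⟨x, hx⟩ => ⟨x, mem_univ x, hx⟩).trans
          (hprob_exists_le hp0 hp1 _ _)
    _ ≤ ∑ _x : Fin n, ((n : ℝ) ^ d * p) ^ k / k.factorial :=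
        sum_le_sum fun x _ => hprob_le_edeg_le hp0 hp1 k x
    _ = n * (((n : ℝ) ^ d * p) ^ k / k.factorial) := by simp

lemma card_eadj_le (H : Finset (Edge d n)) (z : Fin n) :
    (univ.filter (eadj H z)).card ≤ edeg H z * d := by
  have hsub : univ.filter (eadj H z) ⊆ (H.filter fun e => z ∈ e.1).biUnion (·.1.erase z) :=
    fun y hy => by
      obtain ⟨hzy, e, he, hze, hye⟩ := (mem_filter.1 hy).2
      exact mem_biUnion.2 ⟨e, mem_filter.2 ⟨he, hze⟩, mem_erase.2 ⟨Ne.symm hzy, hye⟩⟩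
  refine (card_le_card hsub).trans (card_biUnion_le_card_mul _ _ _ fun e he => ?_)
  rw [card_erase_of_mem (mem_filter.1 he).2, e.2, Nat.add_sub_cancel]

lemma card_hball_le (H : Finset (Edge d n)) (x : Fin n) {k : ℕ}
    (hdeg : ∀ y, edeg H y ≤ k) (r : ℕ) : (hball H x r).card ≤ (1 + k * d) ^ r := by
  induction r with
  | zero => simp [hball]
  | succ r ih =>
    have hsub : hball H x (r + 1) ⊆
        (hball H x r).biUnion fun z => insert z (univ.filter (eadj H z)) := fun y hy => by
      rcases mem_union.1 hy with hy | hy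
      · exact mem_biUnion.2 ⟨y, hy, mem_insert_self _ _⟩
      · obtain ⟨z, hz, hzy⟩ := (mem_filter.1 hy).2
        exact mem_biUnion.2 ⟨z, hz, mem_insert_of_mem (mem_filter.2 ⟨mem_univ _, hzy⟩)⟩
    have hstep : ∀ z ∈ hball H x r, (insert z (univ.filter (eadj H z))).card ≤ 1 + k * d :=
      fun z _ => (card_insert_le _ _).trans <| by
        have := (card_eadj_le H z).trans (Nat.mul_le_mul_right d (hdeg z))
        omega
    calc (hball H x (r + 1)).card ≤ (hball H x r).card * (1 + k * d) :=
          (card_le_card hsub).trans (card_biUnion_le_card_mul _ _ _ hstep)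
      _ ≤ (1 + k * d) ^ (r + 1) := by rw [pow_succ]; exact Nat.mul_le_mul_right _ ih

end RandomHypergraph

lemma pow_div_factorial_add_le {C : ℝ} (hC : 0 ≤ C) (K m : ℕ) :
    C ^ (K + m) / (K + m).factorial ≤ C ^ K / K.factorial * (C / (K + 1)) ^ m := by
  have hfact : (K.factorial : ℝ) * (K + 1) ^ m ≤ (K + m).factorial := by
    exact_mod_cast Nat.factorial_mul_pow_le_factorial
  rw [div_pow, div_mul_div_comm, ← pow_add]
  gcongr

lemma mul_pow_div_factorial_le {C : ℝ} (hC : 0 ≤ C) {K m n : ℕ} (hK : C * Real.exp 1 ≤ K + 1)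
    (hm : 2 * Real.log n ≤ m) (hn : 0 < n) :
    n * (C ^ (K + m) / (K + m).factorial) ≤ C ^ K / K.factorial / n := by
  have hratio : C / (K + 1) ≤ Real.exp (-1) := by
    rw [div_le_iff₀ (by positivity), Real.exp_neg, ← div_eq_inv_mul, le_div_iff₀ (by positivity)]
    exact hK
  have hexp : (n : ℝ) ^ 2 ≤ Real.exp m := by
    rw [← Real.exp_log (by positivity : (0 : ℝ) < n ^ 2), Real.log_pow]
    exact Real.exp_le_exp.2 (by exact_mod_cast hm)
  calc n * (C ^ (K + m) / (K + m).factorial)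
      ≤ n * (C ^ K / K.factorial * Real.exp (-1) ^ m) := by
        gcongr
        exact (pow_div_factorial_add_le hC K m).trans (by gcongr)
    _ = n * (C ^ K / K.factorial) / Real.exp m := by
        rw [← Real.exp_nat_mul, mul_neg_one, Real.exp_neg]; ring
    _ ≤ n * (C ^ K / K.factorial) / n ^ 2 := by gcongr
    _ = C ^ K / K.factorial / n := by field_simp

lemma isLittleO_const_add_mul_log_pow (a b : ℝ) (r : ℕ) {δ : ℝ} (hδ : 0 < δ) :
    (fun x => (a + b * Real.log x) ^ r) =o[atTop] fun x => x ^ δ := by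
  have hlin : (fun x => a + b * Real.log x) =O[atTop] Real.log :=
    (isLittleO_const_left.2 (Or.inr (tendsto_norm_atTop_atTop.comp
      Real.tendsto_log_atTop))).isBigO.add (isBigO_const_mul_self b _ _)
  refine (hlin.pow r).trans_isLittleO ?_
  simpa only [Real.rpow_natCast] using isLittleO_log_rpow_rpow_atTop (r : ℝ) hδ

lemma eventually_one_add_mul_pow_le (K d r : ℕ) {ε δ : ℝ} (hε : 0 < ε) (hδ : 0 < δ) :
    ∀ᶠ n : ℕ in atTop,
      (((1 + (K + ⌈2 * Real.log n⌉₊) * d : ℕ) : ℝ)) ^ r ≤ ε * (n : ℝ) ^ δ := by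
  have hpoly := ((isLittleO_const_add_mul_log_pow (1 + (K + 1) * d) (2 * d) r hδ).comp_tendsto
    tendsto_natCast_atTop_atTop).bound hε
  filter_upwards [hpoly] with n hn
  have hlog := Real.log_natCast_nonneg n
  have hceil := Nat.ceil_lt_add_one (mul_nonneg zero_le_two hlog)
  simp only [Function.comp_apply, Real.norm_eq_abs, abs_pow,
    abs_of_nonneg (by positivity : (0 : ℝ) ≤ 1 + (K + 1) * d + 2 * d * Real.log n),
    abs_of_nonneg (by positivity : (0 : ℝ) ≤ (n : ℝ) ^ δ)] at hn
  refine le_trans (pow_le_pow_left₀ (Nat.cast_nonneg _) ?_ r) hn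
  push_cast
  nlinarith [(Nat.cast_nonneg d : (0 : ℝ) ≤ d)]

theorem stmt_18_general (d : ℕ) (lam : ℝ) (p : ℕ → ℝ)
    (hp : ∀ n, 0 ≤ p n ∧ p n ≤ 1)
    (hpl : Tendsto (fun n => p n * (n : ℝ) ^ (d : ℕ)) atTop (nhds lam))
    (ε δ : ℝ) (hε : 0 < ε) (hδ : 0 < δ) (r : ℕ) :
    Tendsto (fun n => hprob d n (p n)
        fun H => ∃ v₀ : Fin n, ε * (n : ℝ) ^ δ < ((hball H v₀ r).card : ℝ))
      atTop (nhds 0) := by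
  set C := |lam| + 1
  have hC : ∀ᶠ n : ℕ in atTop, (n : ℝ) ^ d * p n ≤ C :=
    (hpl.eventually_lt_const ((le_abs_self lam).trans_lt (lt_add_one _))).mono fun _ h =>
      (mul_comm _ _).trans_le h.le
  obtain ⟨K, hK⟩ := exists_nat_ge (C * Real.exp 1)
  -- Below degree `k n` balls stay polylogarithmic; above it, `C ^ k / k!` is `O(C ^ K / K! / n²)`.
  set k : ℕ → ℕ := fun n => K + ⌈2 * Real.log n⌉₊
  have hbound : ∀ᶠ n : ℕ in atTop, hprob d n (p n)
      (fun H => ∃ v₀ : Fin n, ε * (n : ℝ) ^ δ < ((hball H v₀ r).card : ℝ)) ≤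
        C ^ K / K.factorial / n := by
    filter_upwards [hC, eventually_one_add_mul_pow_le K d r hε hδ, eventually_gt_atTop 0]
      with n hCn hsmall hn
    obtain ⟨hp0, hp1⟩ := hp n
    have hlarge : ∀ H : Finset (Edge d n),
        (∃ v₀ : Fin n, ε * (n : ℝ) ^ δ < ((hball H v₀ r).card : ℝ)) → ∃ x, k n ≤ edeg H x := by
      rintro H ⟨v₀, hv₀⟩
      by_contra! hdeg
      have hcard := card_hball_le H v₀ (fun y => (hdeg y).le) r
      exact hv₀.not_ge (le_trans (by exact_mod_cast hcard) hsmall)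
    calc _ ≤ hprob d n (p n) (fun H => ∃ x, k n ≤ edeg H x) := hprob_mono hp0 hp1 hlarge
      _ ≤ n * (((n : ℝ) ^ d * p n) ^ k n / (k n).factorial) := hprob_exists_le_edeg_le hp0 hp1 _
      _ ≤ n * (C ^ k n / (k n).factorial) := by gcongr
      _ ≤ C ^ K / K.factorial / n :=
        mul_pow_div_factorial_le (by positivity) (hK.trans (le_add_of_nonneg_right zero_le_one))
          (Nat.le_ceil _) hn
  exact squeeze_zero' (Eventually.of_forall fun n => hprob_nonneg (hp n).1 (hp n).2 _) hbound
    (tendsto_const_div_atTop_nhds_zero_nat _)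

/-- Let `λ > 0` and `p ~ λ/n^d`. For every `ε, δ > 0` and `r`, the probability that some
vertex of `G^{d+1}(n,p)` has a ball of radius `r` with more than `ε n^δ` vertices tends
to `0`. -/
theorem stmt_18 (d : ℕ) (lam : ℝ) (hlam : 0 < lam) (p : ℕ → ℝ)
    (hp : ∀ n, 0 ≤ p n ∧ p n ≤ 1)
    (hpl : Tendsto (fun n => p n * (n : ℝ) ^ (d : ℕ)) atTop (nhds lam))
    (ε δ : ℝ) (hε : 0 < ε) (hδ : 0 < δ) (r : ℕ) :
    Tendsto (fun n => hprob d n (p n)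
        fun H => ∃ v₀ : Fin n, ε * (n : ℝ) ^ δ < ((hball H v₀ r).card : ℝ))
      atTop (nhds 0) :=
  stmt_18_general d lam p hp hpl ε δ hε hδ r

end
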